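/- (Nilpotent perturbation, symmetric part) Let A, B be commuting d-tuples with δ^{m}_{A,B}(X) = 0, and let N_1 be an n_1-nilpotent commuting d-tuple and N_2 an n_2-nilpotent commuting d-tuple with [A, N_1] = [B, N_2] = 0. Then δ^{m+n_1+n_2−2}_{A+N_1, B+N_2}(X) = 0. -/

import Mathlib

/-- δ_{A,B}(Y) = (Σ_i A_i) Y − Y (Σ_i B_i). -/
noncomputable def deltaOp {E : Type*} [NormedAddCommGroup E] [NormedSpace ℂ E]
    {d : ℕ} (A B : Fin d → (E →L[ℂ] E)) : (E →L[ℂ] E) → (E →L[ℂ] E) :=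
  fun Y => (∑ i, A i) * Y - Y * (∑ i, B i)

/-- A commuting d-tuple N is n-nilpotent if every product of its entries of total degree n
vanishes. -/
def IsNilpotentTuple {E : Type*} [NormedAddCommGroup E] [NormedSpace ℂ E]
    {d : ℕ} (N : Fin d → (E →L[ℂ] E)) (n : ℕ) : Prop :=
  ∀ α : Fin d → ℕ, (∑ i, α i) = n → (List.ofFn fun i => (N i) ^ (α i)).prod = 0

/-!
Write `δ_{A,B} = L_a − R_b` with `a = Σ A_i`, `b = Σ B_i`, where `L`, `R` are left and right
multiplication. Then `δ_{A+N₁,B+N₂} = D + T` with `D = L_a − R_b` and `T = L_p − R_q`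
(`p = Σ N₁_i`, `q = Σ N₂_i`). The commutation hypotheses make `D` and `T` commute, and
`p ^ n₁ = q ^ n₂ = 0` (multinomial expansion) gives `T ^ (n₁ + n₂ - 1) = 0`, since `L_p` and
`R_q` commute. In the binomial expansion of `(D + T) ^ (m + n₁ + n₂ - 2) X`, every term has
either a factor `D ^ i X` with `i ≥ m` or a factor `T ^ j` with `j ≥ n₁ + n₂ - 1`.
-/

theorem Commute.add_pow_smul_eq_zero_of_add_le_succ {R M : Type*} [Semiring R]
    [AddCommMonoid M] [Module R M] {x y : R} (h : Commute x y) {m n p : ℕ} {v : M}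
    (hx : x ^ m • v = 0) (hy : y ^ n = 0) (hp : m + n ≤ p + 1) : (x + y) ^ p • v = 0 := by
  rw [h.add_pow', Finset.sum_smul]
  refine Finset.sum_eq_zero ?_
  rintro ⟨i, j⟩ hij
  rw [Finset.HasAntidiagonal.mem_antidiagonal] at hij
  rw [smul_assoc]
  by_cases hi : m ≤ i
  · rw [(h.pow_pow i j).eq, mul_smul, ← Nat.sub_add_cancel hi, pow_add, mul_smul, hx,
      smul_zero, smul_zero, smul_zero]
  · rw [pow_eq_zero_of_le (by omega) hy, mul_zero, zero_smul, smul_zero]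

theorem Finset.noncommProd_univ_eq_prod_ofFn {M : Type*} [Monoid M] {d : ℕ} (f : Fin d → M)
    (hf : ((Finset.univ : Finset (Fin d)) : Set (Fin d)).Pairwise (Function.onFun Commute f)) :
    Finset.univ.noncommProd f hf = (List.ofFn f).prod := by
  simp only [Finset.noncommProd, Fin.univ_val_map]
  exact Multiset.noncommProd_coe _ _

namespace LinearMap

variable {R A : Type*} [CommSemiring R] [Ring A] [Algebra R A]

theorem commute_mulLeft_sub_mulRight {a b c e : A} (hac : Commute a c) (hbe : Commute b e) :
    Commute (mulLeft R a - mulRight R b) (mulLeft R c - mulRight R e) := by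
  have hL : Commute (mulLeft R a) (mulLeft R c) := LinearMap.ext fun x => by
    simp only [Module.End.mul_apply, mulLeft_apply, ← mul_assoc, hac.eq]
  have hR : Commute (mulRight R b) (mulRight R e) := LinearMap.ext fun x => by
    simp only [Module.End.mul_apply, mulRight_apply, mul_assoc, hbe.eq]
  exact (hL.sub_right (commute_mulLeft_right a e)).sub_left
    ((commute_mulLeft_right c b).symm.sub_right hR)

theorem mulLeft_sub_mulRight_pow_eq_zero {a b : A} {m n : ℕ} (ha : a ^ m = 0) (hb : b ^ n = 0) :
    (mulLeft R a - mulRight R b) ^ (m + n - 1) = 0 := by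
  rw [sub_eq_add_neg]
  refine (commute_mulLeft_right (R := R) a b).neg_right.add_pow_add_eq_zero_of_pow_eq_zero ?_ ?_
  · rw [pow_mulLeft, ha, mulLeft_zero_eq_zero]
  · rw [neg_pow, pow_mulRight, hb, mulRight_zero_eq_zero, mul_zero]

end LinearMap

theorem deltaOp_add {E : Type*} [NormedAddCommGroup E] [NormedSpace ℂ E] {d : ℕ}
    (A B N₁ N₂ : Fin d → (E →L[ℂ] E)) (Y : E →L[ℂ] E) :
    deltaOp (A + N₁) (B + N₂) Y = deltaOp A B Y + deltaOp N₁ N₂ Y := by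
  simp only [deltaOp, Pi.add_apply, Finset.sum_add_distrib, add_mul, mul_add]
  abel

theorem IsNilpotentTuple.sum_pow_eq_zero {E : Type*} [NormedAddCommGroup E] [NormedSpace ℂ E]
    {d : ℕ} {N : Fin d → (E →L[ℂ] E)} {n : ℕ} (hnil : IsNilpotentTuple N n)
    (hN : ∀ i j, N i * N j = N j * N i) : (∑ i, N i) ^ n = 0 := by
  have hc : ((Finset.univ : Finset (Fin d)) : Set (Fin d)).Pairwise (Function.onFun Commute N) :=
    fun i _ j _ _ => hN i j
  rw [Finset.sum_pow_eq_sum_piAntidiag_of_commute _ _ hc n]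
  refine Finset.sum_eq_zero fun α hα => ?_
  rw [Finset.noncommProd_univ_eq_prod_ofFn, hnil α (Finset.mem_piAntidiag.1 hα).1, mul_zero]

theorem stmt16_general {E : Type*} [NormedAddCommGroup E] [NormedSpace ℂ E]
    {d : ℕ} (A B N₁ N₂ : Fin d → (E →L[ℂ] E))
    (hN₁ : ∀ i j, N₁ i * N₁ j = N₁ j * N₁ i) (hN₂ : ∀ i j, N₂ i * N₂ j = N₂ j * N₂ i)
    (m n₁ n₂ : ℕ) (hn₁ : 0 < n₁)
    (hnil₁ : IsNilpotentTuple N₁ n₁) (hnil₂ : IsNilpotentTuple N₂ n₂)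
    (hAN : ∀ i j, A i * N₁ j = N₁ j * A i) (hBN : ∀ i j, B i * N₂ j = N₂ j * B i)
    (X : E →L[ℂ] E) (h : (deltaOp A B)^[m] X = 0) :
    (deltaOp (fun i => A i + N₁ i) (fun i => B i + N₂ i))^[m + n₁ + n₂ - 2] X = 0 := by
  set D := LinearMap.mulLeft ℂ (∑ i, A i) - LinearMap.mulRight ℂ (∑ i, B i)
  set T := LinearMap.mulLeft ℂ (∑ i, N₁ i) - LinearMap.mulRight ℂ (∑ i, N₂ i)
  have hδ : deltaOp (fun i => A i + N₁ i) (fun i => B i + N₂ i) = ⇑(D + T) :=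
    funext (deltaOp_add A B N₁ N₂)
  have hDT : Commute D T := LinearMap.commute_mulLeft_sub_mulRight
    (.sum_left _ _ _ fun i _ => .sum_right _ _ _ fun j _ => hAN i j)
    (.sum_left _ _ _ fun i _ => .sum_right _ _ _ fun j _ => hBN i j)
  have hT : T ^ (n₁ + n₂ - 1) = 0 := LinearMap.mulLeft_sub_mulRight_pow_eq_zero
    (hnil₁.sum_pow_eq_zero hN₁) (hnil₂.sum_pow_eq_zero hN₂)
  have hDX : D ^ m • X = 0 := by rwa [Module.End.smul_def, Module.End.pow_apply]
  rw [hδ, ← Module.End.pow_apply, ← Module.End.smul_def]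
  exact hDT.add_pow_smul_eq_zero_of_add_le_succ hDX hT (by omega)

theorem stmt16 {E : Type*} [NormedAddCommGroup E] [NormedSpace ℂ E] [CompleteSpace E]
    {d : ℕ} (A B N₁ N₂ : Fin d → (E →L[ℂ] E))
    (hA : ∀ i j, A i * A j = A j * A i) (hB : ∀ i j, B i * B j = B j * B i)
    (hN₁ : ∀ i j, N₁ i * N₁ j = N₁ j * N₁ i) (hN₂ : ∀ i j, N₂ i * N₂ j = N₂ j * N₂ i)
    (m n₁ n₂ : ℕ) (hm : 0 < m) (hn₁ : 0 < n₁) (hn₂ : 0 < n₂)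
    (hnil₁ : IsNilpotentTuple N₁ n₁) (hnil₂ : IsNilpotentTuple N₂ n₂)
    (hAN : ∀ i j, A i * N₁ j = N₁ j * A i) (hBN : ∀ i j, B i * N₂ j = N₂ j * B i)
    (X : E →L[ℂ] E) (h : (deltaOp A B)^[m] X = 0) :
    (deltaOp (fun i => A i + N₁ i) (fun i => B i + N₂ i))^[m + n₁ + n₂ - 2] X = 0 :=
  stmt16_general A B N₁ N₂ hN₁ hN₂ m n₁ n₂ hn₁ hnil₁ hnil₂ hAN hBN X h
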